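/- (Rowbottom's theorem, without AC) If μ is a normal κ-complete nonprincipal ultrafilter on κ and h : [A]^{<ω} → 2 is a partition of the finite subsets of a set A ∈ μ, then there exists C ⊆ A with C ∈ μ such that for every n < ω, h is constant on [C]^n. -/

import Mathlib

/-! Every `f : [κ]^{n+1} → 2` is reduced to the colourings `s ↦ f ({α} ∪ s)` of `[κ]^n`,
one for each `α < κ`. By induction each of these has a homogeneous set `H α ∈ μ`, and
normality makes the diagonal intersection of the `H α` homogeneous for `f` up to the colour
of the least element, which the ultrafilter then fixes. The homogeneous sets for the
different `n` are intersected using `κ`-completeness, since `κ > ω`. -/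

open Set

/-- `μ` is an ultrafilter on the ordinal `κ` (subsets of `κ` identified with
subsets of `Set.Iio κ`). -/
def UltraOn (κ : Ordinal) (μ : Set (Set Ordinal)) : Prop :=
  (∀ A ∈ μ, A ⊆ Set.Iio κ) ∧ Set.Iio κ ∈ μ ∧ (∅ : Set Ordinal) ∉ μ ∧
  (∀ A ∈ μ, ∀ B : Set Ordinal, A ⊆ B → B ⊆ Set.Iio κ → B ∈ μ) ∧
  (∀ A ∈ μ, ∀ B ∈ μ, A ∩ B ∈ μ) ∧
  (∀ A : Set Ordinal, A ⊆ Set.Iio κ → A ∈ μ ∨ Set.Iio κ \ A ∈ μ)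

/-- `μ` is `κ`-complete: intersections of fewer than `κ` many members of `μ`
belong to `μ`. -/
def CompleteOn (κ : Ordinal) (μ : Set (Set Ordinal)) : Prop :=
  ∀ γ < κ, ∀ A : Ordinal → Set Ordinal, (∀ α < γ, A α ∈ μ) →
    (Set.Iio κ ∩ ⋂ α < γ, A α) ∈ μ

/-- `μ` is nonprincipal: no singleton belongs to `μ`. -/
def NonPrincipalOn (μ : Set (Set Ordinal)) : Prop := ∀ α : Ordinal, {α} ∉ μ

/-- `μ` is normal: closed under diagonal intersections. -/
def NormalOn (κ : Ordinal) (μ : Set (Set Ordinal)) : Prop :=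
  ∀ A : Ordinal → Set Ordinal, (∀ α < κ, A α ∈ μ) →
    {β | β < κ ∧ ∀ α < β, β ∈ A α} ∈ μ

/-- A Prikry condition `(s, A)`: `s ∈ [κ]^{<ω}`, `A ∈ μ`, `max s < min A`. -/
structure PrikryCond (κ : Ordinal) (μ : Set (Set Ordinal)) where
  stem : Finset Ordinal
  meas : Set Ordinal
  stem_lt : ∀ x ∈ stem, x < κ
  meas_mem : meas ∈ μ
  stem_lt_meas : ∀ x ∈ stem, ∀ y ∈ meas, x < y

/-- `p` extends `q`: `s_p ⊇ s_q`, `A_p ⊆ A_q`, and `s_p \ s_q ⊆ A_q`. -/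
def PrikryLE {κ : Ordinal} {μ : Set (Set Ordinal)} (p q : PrikryCond κ μ) : Prop :=
  q.stem ⊆ p.stem ∧ p.meas ⊆ q.meas ∧ ∀ x ∈ p.stem, x ∉ q.stem → x ∈ q.meas

def IsHomogeneous {α β : Type*} (f : Finset α → β) (n : ℕ) (H : Set α) : Prop :=
  ∃ c, ∀ s : Finset α, ↑s ⊆ H → s.card = n → f s = c

theorem IsHomogeneous.eq {α β : Type*} {f : Finset α → β} {n : ℕ} {H : Set α}
    (hH : IsHomogeneous f n H) {s t : Finset α} (hs : ↑s ⊆ H) (ht : ↑t ⊆ H)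
    (hsn : s.card = n) (htn : t.card = n) : f s = f t := by
  obtain ⟨c, hc⟩ := hH
  rw [hc s hs hsn, hc t ht htn]

variable {κ : Ordinal} {μ : Set (Set Ordinal)}

namespace UltraOn

theorem Iio_mem (hu : UltraOn κ μ) : Iio κ ∈ μ := hu.2.1

theorem mem_of_superset (hu : UltraOn κ μ) {A B : Set Ordinal} (hA : A ∈ μ) (hAB : A ⊆ B)
    (hB : B ⊆ Iio κ) : B ∈ μ :=
  hu.2.2.2.1 A hA B hAB hB

theorem inter_mem (hu : UltraOn κ μ) {A B : Set Ordinal} (hA : A ∈ μ) (hB : B ∈ μ) :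
    A ∩ B ∈ μ :=
  hu.2.2.2.2.1 A hA B hB

theorem nonempty_of_mem (hu : UltraOn κ μ) {A : Set Ordinal} (hA : A ∈ μ) : A.Nonempty :=
  nonempty_iff_ne_empty.mpr fun h => hu.2.2.1 (h ▸ hA)

theorem mem_or_diff_mem (hu : UltraOn κ μ) {A : Set Ordinal} (hA : A ⊆ Iio κ) :
    A ∈ μ ∨ Iio κ \ A ∈ μ :=
  hu.2.2.2.2.2 A hA

theorem exists_fiber_mem (hu : UltraOn κ μ) (c : Ordinal → Fin 2) :
    ∃ i, {α | α < κ ∧ c α = i} ∈ μ := by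
  rcases hu.mem_or_diff_mem (A := {α | α < κ ∧ c α = 0}) fun α hα => hα.1 with h | h
  · exact ⟨0, h⟩
  · refine ⟨1, hu.mem_of_superset h (fun α ⟨hακ, hα0⟩ => ⟨hακ, ?_⟩) fun α hα => hα.1⟩
    have : c α ≠ 0 := fun h0 => hα0 ⟨hακ, h0⟩
    omega

theorem diff_singleton_mem (hu : UltraOn κ μ) (hnp : NonPrincipalOn μ) {ξ : Ordinal}
    (hξ : ξ < κ) : Iio κ \ {ξ} ∈ μ :=
  (hu.mem_or_diff_mem (singleton_subset_iff.mpr hξ)).resolve_left (hnp ξ)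

theorem Ioo_mem (hu : UltraOn κ μ) (hc : CompleteOn κ μ) (hnp : NonPrincipalOn μ)
    {α : Ordinal} (hα : α < κ) : Ioo α κ ∈ μ := by
  have hcompl := hc α hα (fun ξ => Iio κ \ {ξ})
    fun ξ hξ => hu.diff_singleton_mem hnp (hξ.trans hα)
  refine hu.mem_of_superset (hu.inter_mem hcompl (hu.diff_singleton_mem hnp hα))
    (fun β ⟨⟨hβκ, hβ⟩, hβα⟩ => ⟨?_, hβκ⟩) Ioo_subset_Iio_self
  simp only [mem_iInter, mem_sdiff, mem_singleton_iff] at hβ hβα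
  exact lt_of_le_of_ne (not_lt.mp fun h => (hβ β h).2 rfl) (Ne.symm hβα.2)

theorem succ_lt (hu : UltraOn κ μ) (hc : CompleteOn κ μ) (hnp : NonPrincipalOn μ)
    {α : Ordinal} (hα : α < κ) : Order.succ α < κ := by
  obtain ⟨β, hαβ, hβκ⟩ := hu.nonempty_of_mem (hu.Ioo_mem hc hnp hα)
  exact (Order.succ_le_of_lt hαβ).trans_lt hβκ

/-- Every nonzero element of the diagonal intersection of the tails `(α + 1, κ)` is a limit
ordinal. -/
theorem omega0_lt (hu : UltraOn κ μ) (hc : CompleteOn κ μ) (hnp : NonPrincipalOn μ)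
    (hnorm : NormalOn κ μ) : Ordinal.omega0 < κ := by
  obtain ⟨γ, hγ⟩ := hu.nonempty_of_mem hu.Iio_mem
  have hdiag := hnorm (fun α => Ioo (Order.succ α) κ)
    fun α hα => hu.Ioo_mem hc hnp (hu.succ_lt hc hnp hα)
  obtain ⟨β, ⟨hβκ, hβ⟩, hβ0⟩ :=
    hu.nonempty_of_mem (hu.inter_mem hdiag (hu.Ioo_mem hc hnp (zero_le.trans_lt hγ)))
  have hlim : Order.IsSuccLimit β :=
    Ordinal.isSuccLimit_iff.mpr
      ⟨hβ0.1.ne', Order.isSuccPrelimit_of_succ_lt fun α hα => (hβ α hα).1⟩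
  exact (Ordinal.omega0_le_of_isSuccLimit hlim).trans_lt hβκ

end UltraOn

theorem CompleteOn.inter_iInter_nat_mem (hc : CompleteOn κ μ) (hω : Ordinal.omega0 < κ)
    (H : ℕ → Set Ordinal) (hH : ∀ n, H n ∈ μ) : Iio κ ∩ ⋂ n, H n ∈ μ := by
  have hcount := hc Ordinal.omega0 hω (fun o => ⋂ (n : ℕ) (_ : (n : Ordinal) = o), H n)
    fun o ho => by
      obtain ⟨n, rfl⟩ := Ordinal.lt_omega0.mp ho
      simpa only [Nat.cast_inj, iInter_iInter_eq_left] using hH n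
  convert hcount using 2
  ext x
  simp only [mem_iInter]
  exact ⟨fun hx o _ n _ => hx n, fun hx n => hx n (Ordinal.natCast_lt_omega0 n) n rfl⟩

theorem exists_homogeneous_mem_succ (hu : UltraOn κ μ) (hnorm : NormalOn κ μ)
    {n : ℕ} {f : Finset Ordinal → Fin 2} (H : Ordinal → Set Ordinal) (c : Ordinal → Fin 2)
    (hHμ : ∀ α, H α ∈ μ)
    (hH : ∀ α (s : Finset Ordinal), ↑s ⊆ H α → s.card = n → f (insert α s) = c α) :
    ∃ D ∈ μ, IsHomogeneous f (n + 1) D := by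
  obtain ⟨i, hi⟩ := hu.exists_fiber_mem c
  have hdiag := hnorm H fun α _ => hHμ α
  refine ⟨_, hu.inter_mem hi hdiag, i, fun s hsD hsn => ?_⟩
  have hne : s.Nonempty := Finset.card_pos.mp (by omega)
  have hmin : s.min' hne ∈ s := s.min'_mem hne
  have hrest : ↑(s.erase (s.min' hne)) ⊆ H (s.min' hne) := fun β hβ =>
    (hsD (Finset.mem_of_mem_erase hβ)).2.2 _ (s.min'_lt_of_mem_erase_min' hne hβ)
  have hcard : (s.erase (s.min' hne)).card = n := by
    rw [Finset.card_erase_of_mem hmin, hsn, Nat.add_sub_cancel]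
  rw [← Finset.insert_erase hmin, hH _ _ hrest hcard]
  exact (hsD hmin).1.2

theorem exists_homogeneous_mem (hu : UltraOn κ μ) (hnorm : NormalOn κ μ) (n : ℕ) :
    ∀ f : Finset Ordinal → Fin 2, ∃ H ∈ μ, IsHomogeneous f n H := by
  induction n with
  | zero =>
    exact fun f => ⟨Iio κ, hu.Iio_mem, f ∅, fun s _ hs => by rw [Finset.card_eq_zero.mp hs]⟩
  | succ n ih =>
    intro f
    choose H hHμ c hH using fun α : Ordinal => ih fun s => f (insert α s)
    exact exists_homogeneous_mem_succ hu hnorm H c hHμ hH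

/-- Rowbottom's theorem, without AC: given a normal `κ`-complete
nonprincipal ultrafilter `μ`, `A ∈ μ` and a partition `h : [A]^{<ω} → 2`,
there is `C ⊆ A` in `μ` such that `h` is constant on `[C]^n` for each `n`. -/
theorem rowbottom (κ : Ordinal) (μ : Set (Set Ordinal))
    (hu : UltraOn κ μ) (hc : CompleteOn κ μ) (hnp : NonPrincipalOn μ)
    (hnorm : NormalOn κ μ) (A : Set Ordinal) (hA : A ∈ μ)
    (h : Finset Ordinal → Fin 2) :
    ∃ C : Set Ordinal, C ⊆ A ∧ C ∈ μ ∧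
      ∀ n : ℕ, ∀ s t : Finset Ordinal, ↑s ⊆ C → ↑t ⊆ C →
        s.card = n → t.card = n → h s = h t := by
  choose H hHμ hH using fun n => exists_homogeneous_mem hu hnorm n h
  have hω := hu.omega0_lt hc hnp hnorm
  refine ⟨A ∩ (Iio κ ∩ ⋂ n, H n), inter_subset_left,
    hu.inter_mem hA (hc.inter_iInter_nat_mem hω H hHμ), fun n s t hs ht => ?_⟩
  have hCH : A ∩ (Iio κ ∩ ⋂ n, H n) ⊆ H n := fun x hx => mem_iInter.mp hx.2.2 n
  exact (hH n).eq (hs.trans hCH) (ht.trans hCH)
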